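/- arXiv:0805.1234 — 2 statements merged into one kernel-verified Lean document; each statement's English description precedes it below -/
import Mathlib

section
/- Let φ: A → B be a group homomorphism, and let Ĥ ⊆ B̃ ⊆ B be subgroups of B such that Ĥ is normal in B. Set Â = φ⁻¹(Ĥ) and Ã = φ⁻¹(B̃). Assume that the induced maps A/Â → B/Ĥ and A/[Â,Â] → B/[Ĥ,Ĥ] are bijections. Then the induced maps of left coset spaces A/Ã → B/B̃ and A/[Ã,Ã] → B/[B̃,B̃] are also bijections. -/
/-!
Write `N = [Ĥ,Ĥ]`, a normal subgroup of `B`. The map `A/J → B/K` is bijective exactly when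
`J = φ⁻¹(K)` and `B = φ(A)·K`; in particular `B = φ(A)·N` and `φ⁻¹(N) ⊆ [Â,Â]`. Surjectivity
passes from `N` to the larger subgroups `B̃` and `[B̃,B̃]`, and injectivity of
`A/Ã → B/B̃` is automatic. For `A/[Ã,Ã] → B/[B̃,B̃]`, work in `B/N`: as `N ⊆ B̃` and
`A → B/N` is onto, the images of `B̃` and of `Ã` in `B/N` agree, hence so do those of their
commutator subgroups; thus `φ⁻¹([B̃,B̃]) ⊆ [Ã,Ã]·φ⁻¹(N) ⊆ [Ã,Ã]`.
-/

namespace FV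

variable {A B : Type} [Group A] [Group B]

/-- The map of left coset spaces `A/J → B/K` induced by a homomorphism `φ : A → B`
with `φ(J) ⊆ K`. -/
def cosetMap (φ : A →* B) (J : Subgroup A) (K : Subgroup B) (h : J ≤ K.comap φ) :
    A ⧸ J → B ⧸ K :=
  Quotient.map' φ fun a a' hr => by
    rw [QuotientGroup.leftRel_apply] at hr ⊢
    simpa using h hr

lemma commutator_comap_le (φ : A →* B) (K : Subgroup B) :
    ⁅K.comap φ, K.comap φ⁆ ≤ (⁅K, K⁆).comap φ := by
  rw [← Subgroup.map_le_iff_le_comap, Subgroup.map_commutator]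
  exact Subgroup.commutator_mono (Subgroup.map_comap_le φ K) (Subgroup.map_comap_le φ K)

variable (φ : A →* B)

lemma cosetMap_mk {J : Subgroup A} {K : Subgroup B} (h : J ≤ K.comap φ) (a : A) :
    cosetMap φ J K h a = (φ a : B ⧸ K) :=
  rfl

lemma injective_cosetMap_iff {J : Subgroup A} {K : Subgroup B} (h : J ≤ K.comap φ) :
    Function.Injective (cosetMap φ J K h) ↔ K.comap φ ≤ J := by
  constructor
  · intro hinj a ha
    have h1 : cosetMap φ J K h a = cosetMap φ J K h (1 : A) := by
      rw [cosetMap_mk, cosetMap_mk, map_one, QuotientGroup.eq, mul_one]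
      exact inv_mem ha
    simpa using QuotientGroup.eq.1 (hinj h1)
  · intro hJ x y
    induction x using QuotientGroup.induction_on with | H a =>
    induction y using QuotientGroup.induction_on with | H a' =>
    rw [cosetMap_mk, cosetMap_mk, QuotientGroup.eq, QuotientGroup.eq, ← map_inv, ← map_mul]
    exact fun hK => hJ hK

lemma surjective_cosetMap_iff {J : Subgroup A} {K : Subgroup B} (h : J ≤ K.comap φ) :
    Function.Surjective (cosetMap φ J K h) ↔ ∀ b : B, ∃ a : A, (φ a)⁻¹ * b ∈ K := by
  rw [← QuotientGroup.mk_surjective.of_comp_iff, Function.Surjective,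
    QuotientGroup.mk_surjective.forall]
  simp only [Function.comp_apply, cosetMap_mk, QuotientGroup.eq]

lemma comap_commutator_le_commutator_comap_sup {N K : Subgroup B} [N.Normal] (hNK : N ≤ K)
    (hsurj : ∀ b : B, ∃ a : A, (φ a)⁻¹ * b ∈ N) :
    ⁅K, K⁆.comap φ ≤ ⁅K.comap φ, K.comap φ⁆ ⊔ N.comap φ := by
  set π := QuotientGroup.mk' N
  set ψ := π.comp φ
  have hψ : Function.Surjective ψ := fun q => by
    induction q using QuotientGroup.induction_on with | H b =>
    obtain ⟨a, ha⟩ := hsurj b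
    exact ⟨a, QuotientGroup.eq.2 ha⟩
  have hK : (K.comap φ).map ψ = K.map π := by
    rw [← Subgroup.map_comap_eq_self_of_surjective hψ (K.map π), ← Subgroup.comap_comap,
      QuotientGroup.comap_map_mk', sup_eq_right.2 hNK]
  calc ⁅K, K⁆.comap φ ≤ (⁅K, K⁆.map π).comap ψ :=
        Subgroup.comap_mono (Subgroup.le_comap_map π _)
    _ = (⁅K.comap φ, K.comap φ⁆.map ψ).comap ψ := by
        rw [Subgroup.map_commutator, Subgroup.map_commutator, hK]
    _ = ⁅K.comap φ, K.comap φ⁆ ⊔ N.comap φ := by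
        rw [Subgroup.comap_map_eq, ← MonoidHom.comap_ker, QuotientGroup.ker_mk']

end FV

open FV

theorem stmt5_general (A B : Type) [Group A] [Group B] (φ : A →* B)
    (Hhat Btil : Subgroup B) [Hhat.Normal] (hsub : Hhat ≤ Btil)
    (h2 : Function.Bijective
      (cosetMap φ ⁅Hhat.comap φ, Hhat.comap φ⁆ ⁅Hhat, Hhat⁆ (commutator_comap_le φ Hhat))) :
    Function.Bijective (cosetMap φ (Btil.comap φ) Btil le_rfl) ∧
    Function.Bijective
      (cosetMap φ ⁅Btil.comap φ, Btil.comap φ⁆ ⁅Btil, Btil⁆ (commutator_comap_le φ Btil)) := by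
  obtain ⟨hinj, hsurj⟩ := h2
  rw [injective_cosetMap_iff] at hinj
  rw [surjective_cosetMap_iff] at hsurj
  have hNB : ⁅Hhat, Hhat⁆ ≤ Btil := (Subgroup.commutator_le_left Hhat Hhat).trans hsub
  have hcomm : ⁅Hhat.comap φ, Hhat.comap φ⁆ ≤ ⁅Btil.comap φ, Btil.comap φ⁆ :=
    Subgroup.commutator_mono (Subgroup.comap_mono hsub) (Subgroup.comap_mono hsub)
  refine ⟨⟨(injective_cosetMap_iff φ _).2 le_rfl, (surjective_cosetMap_iff φ _).2 ?_⟩,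
    ⟨(injective_cosetMap_iff φ _).2 ?_, (surjective_cosetMap_iff φ _).2 ?_⟩⟩
  · exact fun b => (hsurj b).imp fun a ha => hNB ha
  · calc ⁅Btil, Btil⁆.comap φ
        ≤ ⁅Btil.comap φ, Btil.comap φ⁆ ⊔ ⁅Hhat, Hhat⁆.comap φ :=
          comap_commutator_le_commutator_comap_sup φ hNB hsurj
      _ ≤ ⁅Btil.comap φ, Btil.comap φ⁆ := sup_le le_rfl (hinj.trans hcomm)
  · exact fun b => (hsurj b).imp fun a ha => Subgroup.commutator_mono hsub hsub ha

/-- Let `φ : A → B` be a homomorphism, `Ĥ ⊆ B̃ ⊆ B` subgroups with `Ĥ`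
normal in `B`, and `Â = φ⁻¹(Ĥ)`, `Ã = φ⁻¹(B̃)`.  If the induced maps `A/Â → B/Ĥ` and
`A/[Â,Â] → B/[Ĥ,Ĥ]` are bijective, then so are the induced maps `A/Ã → B/B̃` and
`A/[Ã,Ã] → B/[B̃,B̃]`. -/
theorem stmt5 (A B : Type) [Group A] [Group B] (φ : A →* B)
    (Hhat Btil : Subgroup B) [Hhat.Normal] (hsub : Hhat ≤ Btil)
    (h1 : Function.Bijective (cosetMap φ (Hhat.comap φ) Hhat le_rfl))
    (h2 : Function.Bijective
      (cosetMap φ ⁅Hhat.comap φ, Hhat.comap φ⁆ ⁅Hhat, Hhat⁆ (commutator_comap_le φ Hhat))) :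
    Function.Bijective (cosetMap φ (Btil.comap φ) Btil le_rfl) ∧
    Function.Bijective
      (cosetMap φ ⁅Btil.comap φ, Btil.comap φ⁆ ⁅Btil, Btil⁆ (commutator_comap_le φ Btil)) :=
  stmt5_general A B φ Hhat Btil hsub h2
end

section
/- Let A and B be finitely generated groups and let i_-, i_+: A → B be injective homomorphisms. Let n ∈ ℕ and suppose that for each of i_- and i_+ and for every finite solvable group T of derived length ≤ n, the precomposition map Hom(B,T) → Hom(A,T) is a bijection. Let S be a finite solvable group of derived length ≤ n, and let B(S) denote the intersection of the kernels of all homomorphisms B → S. Let π be the HNN extension of B along the isomorphism between the subgroups i_+(A) and i_-(A) of B induced by i_- ∘ i_+⁻¹, i.e. π = ⟨B, t | t i_+(a) t⁻¹ = i_-(a) for all a ∈ A⟩. Then there exist k ≥ 1, an action of ℤ/k on B/B(S) by group automorphisms, and a group homomorphism from π to the semidirect product (ℤ/k) ⋉ (B/B(S)) whose restriction to B is the composition of the quotient map B → B/B(S) with the canonical inclusion of B/B(S) into the semidirect product. -/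
/-!
Write `Q = B ⧸ B(S)`. It is finite, since `B(S)` is the intersection of the finitely many
finite-index kernels of maps `B → S`, and its derived length is at most `n`, since the `n`-th
derived subgroup of `B` dies in every such map. Every map `B → Q` factors through `Q`, so the
hypotheses make precomposition with `A → B → Q` (via `i₊` or `i₋`) a bijection `End Q → Hom(A, Q)`.
This yields an automorphism `σ` of `Q` with `σ ∘ i₊ = i₋` modulo `B(S)`; letting `ℤ/ord(σ)` act
on `Q` through `σ`, the stable letter goes to the generator of `ℤ/ord(σ)`.
-/

namespace FV

/-- `C(H)`: the intersection of the kernels of all homomorphisms `C → H`. -/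
def kerInt (C : Type) [Group C] (H : Type) [Group H] : Subgroup C :=
  ⨅ f : C →* H, f.ker

instance kerInt_normal (C : Type) [Group C] (H : Type) [Group H] : (kerInt C H).Normal := by
  constructor
  intro x hx g
  rw [kerInt, Subgroup.mem_iInf] at hx ⊢
  intro f
  have hf := hx f
  rw [MonoidHom.mem_ker] at hf ⊢
  simp [hf]

lemma kerInt_le_comap {A B : Type} [Group A] [Group B] (i : A →* B) (S : Type) [Group S] :
    kerInt A S ≤ (kerInt B S).comap i := by
  intro a ha
  rw [kerInt, Subgroup.mem_iInf] at ha
  rw [Subgroup.mem_comap, kerInt, Subgroup.mem_iInf]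
  intro f
  exact ha (f.comp i)

end FV

namespace FV

section KerInt

variable {B : Type} [Group B] {S : Type} [Group S]

lemma finite_monoidHom_of_fg [Group.FG B] [Finite S] : Finite (B →* S) := by
  obtain ⟨T, hT, hTfin⟩ := Group.fg_iff.mp ‹Group.FG B›
  have : Finite T := hTfin
  refine Finite.of_injective (fun f : B →* S => fun t : T => f t) fun f g hfg => ?_
  exact MonoidHom.eq_of_eqOn_dense hT fun x hx => congrFun hfg ⟨x, hx⟩

instance finiteIndex_kerInt [Group.FG B] [Finite S] : (kerInt B S).FiniteIndex :=
  have := finite_monoidHom_of_fg (B := B) (S := S)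
  Subgroup.finiteIndex_iInf fun f => Subgroup.finiteIndex_ker f

lemma derivedSeries_le_kerInt {n : ℕ} (hS : derivedSeries S n = ⊥) :
    derivedSeries B n ≤ kerInt B S :=
  le_iInf fun f => (Subgroup.map_eq_bot_iff _).mp <|
    eq_bot_iff.mpr <| hS ▸ map_derivedSeries_le_derivedSeries f n

lemma derivedSeries_quotient_kerInt {n : ℕ} (hS : derivedSeries S n = ⊥) :
    derivedSeries (B ⧸ kerInt B S) n = ⊥ := by
  rw [← map_derivedSeries_eq (QuotientGroup.mk'_surjective _), Subgroup.map_eq_bot_iff,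
    QuotientGroup.ker_mk']
  exact derivedSeries_le_kerInt hS

/-- Use `B(S) ≤ ker (ḡ ∘ f)`, where `ḡ : B ⧸ B(S) → S` is the factorisation of `g : B → S`. -/
lemma kerInt_le_ker (f : B →* B ⧸ kerInt B S) : kerInt B S ≤ f.ker := by
  intro b hb
  obtain ⟨x, hx⟩ := QuotientGroup.mk_surjective (f b)
  rw [MonoidHom.mem_ker, ← hx, QuotientGroup.eq_one_iff, kerInt, Subgroup.mem_iInf]
  intro g
  have hg : kerInt B S ≤ g.ker := iInf_le _ g
  have := (Subgroup.mem_iInf.mp hb) ((QuotientGroup.lift _ g hg).comp f)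
  rwa [MonoidHom.mem_ker, MonoidHom.comp_apply, ← hx, QuotientGroup.lift_mk] at this

end KerInt

lemma bijective_comp_mk' {B Q : Type} [Group B] [Group Q] (N : Subgroup B) [N.Normal]
    (hN : ∀ f : B →* Q, N ≤ f.ker) :
    Function.Bijective fun φ : B ⧸ N →* Q => φ.comp (QuotientGroup.mk' N) :=
  ⟨fun _ _ h => QuotientGroup.monoidHom_ext N h,
    fun f => ⟨QuotientGroup.lift N f (hN f), MonoidHom.ext fun _ => rfl⟩⟩

/-- The endomorphisms carrying `q` to `r` and `r` to `q` are mutually inverse, by the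
injectivity of the two precomposition maps. -/
lemma exists_mulEquiv_comp_eq {A Q : Type} [Group A] [Group Q] (q r : A →* Q)
    (hq : Function.Bijective fun φ : Q →* Q => φ.comp q)
    (hr : Function.Bijective fun φ : Q →* Q => φ.comp r) :
    ∃ σ : Q ≃* Q, σ.toMonoidHom.comp q = r := by
  obtain ⟨σ, hσ⟩ := hq.surjective r
  obtain ⟨τ, hτ⟩ := hr.surjective q
  have hτσ : τ.comp σ = MonoidHom.id Q :=
    hq.injective (by simp only [MonoidHom.comp_assoc, hσ, hτ, MonoidHom.id_comp])
  have hστ : σ.comp τ = MonoidHom.id Q :=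
    hr.injective (by simp only [MonoidHom.comp_assoc, hσ, hτ, MonoidHom.id_comp])
  exact ⟨MonoidHom.toMulEquiv σ τ hτσ hστ, hσ⟩

lemma exists_monoidHom_zmod_orderOf {G : Type} [Group G] (g : G) :
    ∃ φ : Multiplicative (ZMod (orderOf g)) →* G, φ (Multiplicative.ofAdd 1) = g := by
  have hg : zmultiplesHom _ (Additive.ofMul g) (orderOf g) = 0 := by
    rw [zmultiplesHom_apply, natCast_zsmul, ← ofMul_pow, pow_orderOf_eq_one, ofMul_one]
  refine ⟨AddMonoidHom.toMultiplicativeLeft (ZMod.lift _ ⟨_, hg⟩), ?_⟩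
  rw [AddMonoidHom.toMultiplicativeLeft_apply_apply, toAdd_ofAdd, ← Int.cast_one, ZMod.lift_coe]
  simp

lemma exists_hnnExtension_lift {A B H : Type} [Group A] [Group B] [Group H]
    {iminus iplus : A →* B} (hminus : Function.Injective iminus)
    (hplus : Function.Injective iplus) (f : B →* H) (x : H)
    (hx : ∀ a, x * f (iplus a) = f (iminus a) * x) :
    ∃ Φ : HNNExtension B iplus.range iminus.range
        ((MonoidHom.ofInjective hplus).symm.trans (MonoidHom.ofInjective hminus)) →* H,
      Φ.comp HNNExtension.of = f := by
  have hx' : ∀ a : iplus.range, x * f a =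
      f ((MonoidHom.ofInjective hplus).symm.trans (MonoidHom.ofInjective hminus) a) * x := by
    rintro ⟨-, a, rfl⟩
    have ha : (MonoidHom.ofInjective hplus).symm ⟨iplus a, a, rfl⟩ = a :=
      (MulEquiv.symm_apply_eq _).mpr (Subtype.ext (MonoidHom.ofInjective_apply hplus).symm)
    simpa [ha, MonoidHom.ofInjective_apply] using hx a
  exact ⟨HNNExtension.lift f x hx', MonoidHom.ext (HNNExtension.lift_of f x hx')⟩

end FV

open FV

theorem stmt14_general (A B : Type) [Group A] [Group B] [Group.FG B]
    (iminus iplus : A →* B)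
    (hminus : Function.Injective iminus) (hplus : Function.Injective iplus)
    (n : ℕ)
    (hm : ∀ (T : Type) [Group T] [Finite T] [Group.IsSolvable T], derivedSeries T n = ⊥ →
      Function.Bijective fun ψ : B →* T => ψ.comp iminus)
    (hp : ∀ (T : Type) [Group T] [Finite T] [Group.IsSolvable T], derivedSeries T n = ⊥ →
      Function.Bijective fun ψ : B →* T => ψ.comp iplus)
    (S : Type) [Group S] [Finite S] (hS : derivedSeries S n = ⊥) :
    ∃ k : ℕ, 0 < k ∧
      ∃ (act : Multiplicative (ZMod k) →* MulAut (B ⧸ kerInt B S))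
        (Φ : HNNExtension B iplus.range iminus.range
            ((MonoidHom.ofInjective hplus).symm.trans (MonoidHom.ofInjective hminus)) →*
          (B ⧸ kerInt B S) ⋊[act] Multiplicative (ZMod k)),
        Φ.comp HNNExtension.of
          = SemidirectProduct.inl.comp (QuotientGroup.mk' (kerInt B S)) := by
  set p := QuotientGroup.mk' (kerInt B S)
  have hQ := derivedSeries_quotient_kerInt (B := B) hS
  have : Group.IsSolvable (B ⧸ kerInt B S) := ⟨⟨n, hQ⟩⟩
  have hpQ := bijective_comp_mk' (kerInt B S) kerInt_le_ker
  obtain ⟨σ, hσ⟩ := exists_mulEquiv_comp_eq (p.comp iplus) (p.comp iminus)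
    ((hp _ hQ).comp hpQ) ((hm _ hQ).comp hpQ)
  obtain ⟨act, hact⟩ := exists_monoidHom_zmod_orderOf σ
  refine ⟨orderOf σ, orderOf_pos σ, act, ?_⟩
  refine exists_hnnExtension_lift hminus hplus _ (SemidirectProduct.inr (.ofAdd 1)) fun a => ?_
  have hσa : σ (p (iplus a)) = p (iminus a) := DFunLike.congr_fun hσ a
  simp only [MonoidHom.comp_apply, ← hσa, ← hact, SemidirectProduct.inl_aut]
  rw [map_inv, inv_mul_cancel_right]

/-- Let `i₋, i₊ : A → B` be monomorphisms of finitely generated groups, each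
inducing a bijection `Hom(B,T) → Hom(A,T)` for all finite solvable `T` of derived length
`≤ n`, and let `S` be finite solvable of derived length `≤ n`.  Let `π` be the HNN extension
`⟨B, t | t i₊(a) t⁻¹ = i₋(a)⟩`.  Then there are `k ≥ 1`, an action of `ℤ/k` on `B/B(S)` by
automorphisms, and a homomorphism `π → (ℤ/k) ⋉ (B/B(S))` restricting on `B` to the projection
`B → B/B(S)` followed by the canonical inclusion. -/
theorem stmt14 (A B : Type) [Group A] [Group.FG A] [Group B] [Group.FG B]
    (iminus iplus : A →* B)
    (hminus : Function.Injective iminus) (hplus : Function.Injective iplus)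
    (n : ℕ)
    (hm : ∀ (T : Type) [Group T] [Finite T] [Group.IsSolvable T], derivedSeries T n = ⊥ →
      Function.Bijective fun ψ : B →* T => ψ.comp iminus)
    (hp : ∀ (T : Type) [Group T] [Finite T] [Group.IsSolvable T], derivedSeries T n = ⊥ →
      Function.Bijective fun ψ : B →* T => ψ.comp iplus)
    (S : Type) [Group S] [Finite S] [Group.IsSolvable S] (hS : derivedSeries S n = ⊥) :
    ∃ k : ℕ, 0 < k ∧
      ∃ (act : Multiplicative (ZMod k) →* MulAut (B ⧸ kerInt B S))
        (Φ : HNNExtension B iplus.range iminus.range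
            ((MonoidHom.ofInjective hplus).symm.trans (MonoidHom.ofInjective hminus)) →*
          (B ⧸ kerInt B S) ⋊[act] Multiplicative (ZMod k)),
        Φ.comp HNNExtension.of
          = SemidirectProduct.inl.comp (QuotientGroup.mk' (kerInt B S)) :=
  stmt14_general A B iminus iplus hminus hplus n hm hp S hS
end
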